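/- In the ring A = ℚ[a,b]/⟨a^{n+1}, b²⟩ with n ≥ 1, the kernel of the ℚ-linear map given by multiplication by a + b is the two-dimensional subspace spanned by aⁿ − a^{n−1}b and aⁿb. -/

import Mathlib

/-!
Membership in `⟨a^(n+1), b²⟩` is read off the coefficients of the monomials `a^i b^j` with
`i ≤ n`, `j ≤ 1`. If `(a + b) p` lies in the ideal, comparing the coefficients of `a^(i+1)` and
`a^(i+1) b` shows that those of `a^i` (`i < n`) vanish and that the coefficient of `a^i b` is minus
that of `a^(i+1)`. So modulo the ideal `p` is determined by its coefficients of `aⁿ` and `aⁿ b`,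
and these are exactly its coordinates with respect to `aⁿ − a^(n−1) b` and `aⁿ b`.
-/

set_option synthInstance.maxHeartbeats 400000

open MvPolynomial

noncomputable section

/-- The ideal `⟨a^(n+1), b²⟩` of `ℚ[a,b]`, with `a = X 0`, `b = X 1`. -/
def relIdeal (n : ℕ) : Ideal (MvPolynomial (Fin 2) ℚ) :=
  Ideal.span {X 0 ^ (n + 1), X 1 ^ 2}

namespace Ideal.Quotient

variable {K R : Type*} [CommSemiring K] [CommRing R] [Algebra K R] (I : Ideal R)

lemma mk_smul (r : K) (p : R) : mk I (r • p) = r • mk I p :=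
  map_smul (mkₐ K I) r p

lemma mk_mem_ker_mulLeft_iff (r p : R) :
    mk I p ∈ LinearMap.ker (LinearMap.mulLeft K (mk I r)) ↔ r * p ∈ I := by
  rw [LinearMap.mem_ker, LinearMap.mulLeft_apply, ← map_mul, eq_zero_iff_mem]

end Ideal.Quotient

section Bivariate

variable {R : Type*} [CommSemiring R]

def bidegree (i j : ℕ) : Fin 2 →₀ ℕ := Finsupp.single 0 i + Finsupp.single 1 j

@[simp] lemma bidegree_apply_zero (i j : ℕ) : bidegree i j 0 = i := by simp [bidegree]

@[simp] lemma bidegree_apply_one (i j : ℕ) : bidegree i j 1 = j := by simp [bidegree]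

lemma bidegree_eq_iff {i j k l : ℕ} : bidegree i j = bidegree k l ↔ i = k ∧ j = l := by
  refine ⟨fun h => ⟨by simpa using congr($h 0), by simpa using congr($h 1)⟩, ?_⟩
  rintro ⟨rfl, rfl⟩
  rfl

lemma eq_bidegree (f : Fin 2 →₀ ℕ) : f = bidegree (f 0) (f 1) := by
  ext x; fin_cases x <;> simp

lemma X_pow_mul_X_pow_eq_monomial (i j : ℕ) :
    (X 0 ^ i * X 1 ^ j : MvPolynomial (Fin 2) R) = monomial (bidegree i j) 1 := by
  rw [X_pow_eq_monomial, X_pow_eq_monomial, monomial_mul, one_mul, bidegree]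

lemma coeff_bidegree_succ_zero_X_add_X_mul (p : MvPolynomial (Fin 2) R) (i : ℕ) :
    coeff (bidegree (i + 1) 0) ((X 0 + X 1) * p) = coeff (bidegree i 0) p := by
  rw [add_mul, coeff_add, coeff_X_mul', coeff_X_mul', if_pos (by simp), if_neg (by simp),
    add_zero]
  congr 1
  ext x; fin_cases x <;> simp

lemma coeff_bidegree_succ_one_X_add_X_mul (p : MvPolynomial (Fin 2) R) (i : ℕ) :
    coeff (bidegree (i + 1) 1) ((X 0 + X 1) * p)
      = coeff (bidegree i 1) p + coeff (bidegree (i + 1) 0) p := by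
  rw [add_mul, coeff_add, coeff_X_mul', coeff_X_mul', if_pos (by simp), if_pos (by simp)]
  congr 2 <;> ext x <;> fin_cases x <;> simp

end Bivariate

variable {n : ℕ}

lemma relIdeal_eq_span_monomial :
    relIdeal n = Ideal.span ((monomial · (1 : ℚ)) '' {bidegree (n + 1) 0, bidegree 0 2}) := by
  simp [relIdeal, Set.image_pair, ← X_pow_mul_X_pow_eq_monomial]

lemma mem_relIdeal_iff {p : MvPolynomial (Fin 2) ℚ} :
    p ∈ relIdeal n ↔ ∀ i ≤ n, ∀ j ≤ 1, coeff (bidegree i j) p = 0 := by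
  rw [relIdeal_eq_span_monomial, mem_ideal_span_monomial_image]
  constructor
  · intro h i hi j hj
    by_contra hne
    obtain ⟨s, hs, hle⟩ := h _ (mem_support_iff.mpr hne)
    rcases hs with rfl | rfl
    · have := hle 0; simp at this; omega
    · have := hle 1; simp at this; omega
  · intro h f hf
    rw [mem_support_iff, eq_bidegree f] at hf
    by_cases h0 : f 0 ≤ n
    · refine ⟨bidegree 0 2, by simp, fun x => ?_⟩
      have h1 : ¬ f 1 ≤ 1 := fun h1 => hf (h _ h0 _ h1)
      fin_cases x <;> simp; omega
    · refine ⟨bidegree (n + 1) 0, by simp, fun x => ?_⟩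
      fin_cases x <;> simp; omega

lemma mem_relIdeal_of_X_add_X_mul_mem {q : MvPolynomial (Fin 2) ℚ}
    (hq : (X 0 + X 1) * q ∈ relIdeal n) (h₀ : coeff (bidegree n 0) q = 0)
    (h₁ : coeff (bidegree n 1) q = 0) : q ∈ relIdeal n := by
  rw [mem_relIdeal_iff] at hq ⊢
  have hc : ∀ i ≤ n, coeff (bidegree i 0) q = 0 := by
    intro i hi
    rcases hi.lt_or_eq with hi | rfl
    · rw [← coeff_bidegree_succ_zero_X_add_X_mul]
      exact hq _ hi _ zero_le_one
    · exact h₀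
  intro i hi j hj
  interval_cases j
  · exact hc i hi
  · rcases hi.lt_or_eq with hi | rfl
    · simpa [coeff_bidegree_succ_one_X_add_X_mul, hc (i + 1) hi] using hq (i + 1) hi 1 le_rfl
    · exact h₁

lemma X_add_X_mul_sub_mem_relIdeal (hn : 1 ≤ n) :
    (X 0 + X 1) * (X 0 ^ n - X 0 ^ (n - 1) * X 1) ∈ relIdeal n := by
  obtain ⟨m, rfl⟩ := Nat.exists_eq_add_of_le' hn
  have : (X 0 + X 1) * (X 0 ^ (m + 1) - X 0 ^ m * X 1 : MvPolynomial (Fin 2) ℚ)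
      = 1 * X 0 ^ (m + 1 + 1) + (-X 0 ^ m) * X 1 ^ 2 := by ring
  rw [Nat.add_sub_cancel, this]
  exact Ideal.mem_span_pair.mpr ⟨_, _, rfl⟩

lemma X_add_X_mul_X_pow_mul_mem_relIdeal :
    (X 0 + X 1) * (X 0 ^ n * X 1) ∈ relIdeal n :=
  Ideal.mem_span_pair.mpr ⟨X 1, X 0 ^ n, by ring⟩

lemma coeff_bidegree_smul_add_smul (hn : 1 ≤ n) (s t : ℚ) :
    coeff (bidegree n 0) (s • (X 0 ^ n - X 0 ^ (n - 1) * X 1) + t • (X 0 ^ n * X 1)) = s ∧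
      coeff (bidegree n 1) (s • (X 0 ^ n - X 0 ^ (n - 1) * X 1) + t • (X 0 ^ n * X 1)) = t := by
  have h₀ := X_pow_mul_X_pow_eq_monomial (R := ℚ) n 0
  have h₁ := X_pow_mul_X_pow_eq_monomial (R := ℚ) (n - 1) 1
  have h₂ := X_pow_mul_X_pow_eq_monomial (R := ℚ) n 1
  simp only [pow_zero, mul_one, pow_one] at h₀ h₁ h₂
  rw [h₁, h₂, h₀]
  simp [coeff_monomial, bidegree_eq_iff]
  omega

lemma exists_sub_smul_add_smul_mem_relIdeal (hn : 1 ≤ n) {p : MvPolynomial (Fin 2) ℚ}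
    (hp : (X 0 + X 1) * p ∈ relIdeal n) :
    ∃ s t : ℚ,
      p - (s • (X 0 ^ n - X 0 ^ (n - 1) * X 1) + t • (X 0 ^ n * X 1)) ∈ relIdeal n := by
  set s := coeff (bidegree n 0) p
  set t := coeff (bidegree n 1) p
  obtain ⟨hs, ht⟩ := coeff_bidegree_smul_add_smul hn s t
  refine ⟨s, t, mem_relIdeal_of_X_add_X_mul_mem ?_ ?_ ?_⟩
  · rw [mul_sub, mul_add, mul_smul_comm, mul_smul_comm]
    exact sub_mem hp (add_mem (Submodule.smul_of_tower_mem _ s (X_add_X_mul_sub_mem_relIdeal hn))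
      (Submodule.smul_of_tower_mem _ t X_add_X_mul_X_pow_mul_mem_relIdeal))
  · rw [coeff_sub, hs, sub_self]
  · rw [coeff_sub, ht, sub_self]

lemma ker_mulLeft_mk_X_add_X (hn : 1 ≤ n) :
    LinearMap.ker (LinearMap.mulLeft ℚ (Ideal.Quotient.mk (relIdeal n) (X 0 + X 1)))
      = Submodule.span ℚ
          {Ideal.Quotient.mk (relIdeal n) (X 0 ^ n - X 0 ^ (n - 1) * X 1),
           Ideal.Quotient.mk (relIdeal n) (X 0 ^ n * X 1)} := by
  apply le_antisymm
  · intro x hx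
    obtain ⟨p, rfl⟩ := Ideal.Quotient.mk_surjective x
    obtain ⟨s, t, hst⟩ := exists_sub_smul_add_smul_mem_relIdeal hn
      ((Ideal.Quotient.mk_mem_ker_mulLeft_iff _ _ _).mp hx)
    refine Submodule.mem_span_pair.mpr ⟨s, t, ?_⟩
    rw [← Ideal.Quotient.mk_smul, ← Ideal.Quotient.mk_smul, ← map_add, eq_comm,
      Ideal.Quotient.eq]
    exact hst
  · rw [Submodule.span_le]
    rintro _ (rfl | rfl)
    · exact (Ideal.Quotient.mk_mem_ker_mulLeft_iff _ _ _).mpr (X_add_X_mul_sub_mem_relIdeal hn)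
    · exact (Ideal.Quotient.mk_mem_ker_mulLeft_iff _ _ _).mpr X_add_X_mul_X_pow_mul_mem_relIdeal

lemma linearIndependent_mk_pair (hn : 1 ≤ n) :
    LinearIndependent ℚ ![Ideal.Quotient.mk (relIdeal n) (X 0 ^ n - X 0 ^ (n - 1) * X 1),
      Ideal.Quotient.mk (relIdeal n) (X 0 ^ n * X 1)] := by
  refine LinearIndependent.pair_iff.mpr fun s t hst => ?_
  rw [← Ideal.Quotient.mk_smul, ← Ideal.Quotient.mk_smul, ← map_add,
    Ideal.Quotient.eq_zero_iff_mem, mem_relIdeal_iff] at hst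
  obtain ⟨hs, ht⟩ := coeff_bidegree_smul_add_smul hn s t
  exact ⟨hs ▸ hst n le_rfl 0 zero_le_one, ht ▸ hst n le_rfl 1 le_rfl⟩

/-- In `A = ℚ[a,b]/⟨a^(n+1), b²⟩` with `n ≥ 1`, the kernel of multiplication by `a + b` is the
two-dimensional subspace spanned by `aⁿ − a^(n−1)b` and `aⁿb`. -/
theorem ker_mul_a_add_b (n : ℕ) (hn : 1 ≤ n) :
    LinearMap.ker (LinearMap.mulLeft ℚ (Ideal.Quotient.mk (relIdeal n) (X 0 + X 1)))
      = Submodule.span ℚ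
          {Ideal.Quotient.mk (relIdeal n) (X 0 ^ n - X 0 ^ (n - 1) * X 1),
           Ideal.Quotient.mk (relIdeal n) (X 0 ^ n * X 1)} ∧
    Module.finrank ℚ
      (LinearMap.ker
        (LinearMap.mulLeft ℚ (Ideal.Quotient.mk (relIdeal n) (X 0 + X 1)))) = 2 := by
  refine ⟨ker_mulLeft_mk_X_add_X hn, ?_⟩
  rw [ker_mulLeft_mk_X_add_X hn, ← Matrix.range_cons_cons_empty _ _ ![],
    finrank_span_eq_card (linearIndependent_mk_pair hn), Fintype.card_fin]

end
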